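/- If a polynomial P ∈ ℚ[d] admits a Gotzmann representation, then the shifted polynomial Q(d) = P(d+1) also admits a Gotzmann representation. -/

import Mathlib

open Polynomial

/-- The binomial coefficient polynomial `d ↦ C(d + c, j)`,
i.e. `(d+c)(d+c-1)⋯(d+c-j+1)/j!` as a polynomial in `d` over `ℚ`. -/
noncomputable def binomPoly (c : ℤ) (j : ℕ) : Polynomial ℚ :=
  (j.factorial : ℚ)⁻¹ • ∏ k ∈ Finset.range j, (X + C ((c : ℚ) - (k : ℚ)))

/-- `a = [a_1, …, a_s]` (0-indexed in Lean) is a Gotzmann representation of `P`: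
`a_1 ≥ a_2 ≥ ⋯ ≥ a_s ≥ 0` and `P(d) = ∑_{i=1}^s C(d + a_i - (i-1), a_i)`. -/
def IsGotzmannRep (P : Polynomial ℚ) (a : List ℕ) : Prop :=
  a.Pairwise (· ≥ ·) ∧
  P = ∑ i ∈ Finset.range a.length, binomPoly ((a.getD i 0 : ℤ) - (i : ℤ)) (a.getD i 0)

/-- `P` admits a Gotzmann representation. -/
def HasGotzmannRep (P : Polynomial ℚ) : Prop :=
  ∃ a : List ℕ, IsGotzmannRep P a

lemma binomPoly_zero' (c : ℤ) : binomPoly c 0 = 1 := by simp [binomPoly]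

lemma binomPoly_pascal (c : ℤ) (j : ℕ) :
    binomPoly (c + 1) (j + 1) = binomPoly c (j + 1) + binomPoly c j := by
  unfold binomPoly
  set Q : ℚ[X] := ∏ k ∈ Finset.range j, (X + C ((c : ℚ) - (k : ℚ))) with hQ
  have h1 : ∏ k ∈ Finset.range (j+1), (X + C (((c+1 : ℤ) : ℚ) - (k:ℚ))) =
      Q * (X + C ((c:ℚ) + 1)) := by
    rw [Finset.prod_range_succ']
    congr 1
    · refine Finset.prod_congr rfl fun k _ => ?_
      push_cast; ring_nf
    · push_cast; ring_nf
  have h2 : ∏ k ∈ Finset.range (j+1), (X + C ((c : ℚ) - (k:ℚ))) =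
      Q * (X + C ((c:ℚ) - j)) := by
    rw [Finset.prod_range_succ]
  rw [h1, h2]
  have h3 : (X + C ((c:ℚ) + 1)) = (X + C ((c:ℚ) - j)) + C ((j:ℚ) + 1) := by
    have : (c:ℚ) + 1 = ((c:ℚ) - j) + ((j:ℚ) + 1) := by ring
    rw [this, C_add]; ring
  rw [h3, mul_add, smul_add]
  congr 1
  rw [Polynomial.smul_eq_C_mul, Polynomial.smul_eq_C_mul, ← mul_assoc, mul_right_comm, ← C_mul]
  congr 2
  rw [Nat.factorial_succ]
  have hj : (j.factorial : ℚ) ≠ 0 := Nat.cast_ne_zero.mpr j.factorial_ne_zero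
  field_simp
  push_cast; ring

/-- sum of rep terms for values `b` placed at positions `p, p+1, …`. -/
noncomputable def repSum : ℤ → List ℕ → Polynomial ℚ
  | _, [] => 0
  | p, v :: r => binomPoly ((v : ℤ) - p) v + repSum (p + 1) r

/-- sum of token terms: token `(v, κ)` contributes `binomPoly (v - κ) v`. -/
noncomputable def tokSum (t : List (ℕ × ℤ)) : Polynomial ℚ :=
  (t.map (fun x => binomPoly ((x.1 : ℤ) - x.2) x.1)).sum

lemma tokSum_nil : tokSum [] = 0 := rfl
lemma tokSum_cons (x : ℕ × ℤ) (t : List (ℕ × ℤ)) :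
    tokSum (x :: t) = binomPoly ((x.1 : ℤ) - x.2) x.1 + tokSum t := rfl
lemma tokSum_append (s t : List (ℕ × ℤ)) : tokSum (s ++ t) = tokSum s + tokSum t := by
  simp [tokSum]

/-- token-list invariant: the `j`-th token has index `≤ p + j`. -/
def tinv : ℤ → List (ℕ × ℤ) → Prop
  | _, [] => True
  | p, x :: r => x.2 ≤ p ∧ tinv (p + 1) r

lemma tinv_mono : ∀ (t : List (ℕ × ℤ)) (p q : ℤ), p ≤ q → tinv p t → tinv q t := by
  intro t
  induction t with
  | nil => intro p q _ _; trivial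
  | cons x r ih =>
    intro p q hpq h
    exact ⟨h.1.trans hpq, ih (p+1) (q+1) (by omega) h.2⟩

lemma tinv_append {s t : List (ℕ × ℤ)} {p : ℤ} (hs : tinv p s)
    (ht : tinv (p + s.length) t) : tinv p (s ++ t) := by
  induction s generalizing p with
  | nil => simpa using ht
  | cons x r ih =>
    refine ⟨hs.1, ih hs.2 ?_⟩
    have : p + 1 + (r.length : ℤ) = p + (x :: r).length := by
      push_cast [List.length_cons]; ring
    rw [this]; exact ht

lemma repSum_append (b c : List ℕ) (p : ℤ) :
    repSum p (b ++ c) = repSum p b + repSum (p + b.length) c := by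
  induction b generalizing p with
  | nil => simp [repSum]
  | cons v r ih =>
    have hl : p + ((v :: r).length : ℤ) = p + 1 + (r.length : ℤ) := by
      push_cast [List.length_cons]; ring
    show binomPoly ((v:ℤ) - p) v + repSum (p+1) (r ++ c) = _
    rw [hl, ih (p+1)]
    show _ = binomPoly ((v:ℤ) - p) v + repSum (p+1) r + repSum (p + 1 + (r.length:ℤ)) c
    ring

/-- inner invariant for a list of indices. -/
def iinv : ℤ → List ℤ → Prop
  | _, [] => True
  | p, κ :: r => κ ≤ p ∧ iinv (p + 1) r

/-- inner measure. -/
def imeas : ℤ → List ℤ → ℕ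
  | _, [] => 0
  | p, κ :: r => 1 + (p - κ).toNat + imeas (p + 1) r

/-- INNER lemma. -/
lemma inner (V : ℕ) : ∀ (n : ℕ) (p : ℤ) (idxs : List ℤ), iinv p idxs → imeas p idxs ≤ n →
    ∃ extra : List ℤ, (∀ κ ∈ extra, κ ≤ p + idxs.length) ∧
      (idxs.map (fun κ => binomPoly ((V : ℤ) + 1 - κ) (V + 1))).sum =
        repSum p (List.replicate idxs.length (V + 1)) +
        (extra.map (fun κ => binomPoly ((V : ℤ) - κ) V)).sum := by
  intro n
  induction n with
  | zero =>
    intro p idxs hinv hm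
    match idxs with
    | [] => exact ⟨[], by simp, by simp [repSum]⟩
    | κ :: r => simp [imeas] at hm
  | succ n ih =>
    intro p idxs hinv hm
    match idxs with
    | [] => exact ⟨[], by simp, by simp [repSum]⟩
    | κ :: r =>
      rcases eq_or_lt_of_le hinv.1 with hk | hk
      · -- place: κ = p
        obtain ⟨extra, hb, he⟩ := ih (p+1) r hinv.2 (by simp [imeas, hk] at hm ⊢; omega)
        refine ⟨extra, ?_, ?_⟩
        · intro x hx; have := hb x hx; push_cast [List.length_cons]; omega
        · simp only [List.map_cons, List.sum_cons, he, List.length_cons,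
            List.replicate_succ, repSum, hk]
          push_cast
          ring
      · -- split: κ < p
        have hpas : binomPoly ((V : ℤ) + 1 - κ) (V + 1) =
            binomPoly ((V : ℤ) + 1 - (κ + 1)) (V + 1) + binomPoly ((V : ℤ) - κ) V := by
          have h := binomPoly_pascal ((V : ℤ) - κ) V
          have h1 : (V : ℤ) - κ + 1 = (V : ℤ) + 1 - κ := by ring
          have h2 : (V : ℤ) + 1 - (κ + 1) = (V : ℤ) - κ := by ring
          rw [h1] at h; rw [h2]; exact h
        have hmeas : imeas p ((κ + 1) :: r) ≤ n := by
          simp only [imeas] at hm ⊢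
          omega
        obtain ⟨extra, hb, he⟩ := ih p ((κ+1) :: r) ⟨by omega, hinv.2⟩ hmeas
        refine ⟨κ :: extra, ?_, ?_⟩
        · intro x hx
          rcases List.mem_cons.mp hx with hx | hx
          · push_cast [List.length_cons]; omega
          · have := hb x hx
            push_cast [List.length_cons] at this ⊢
            omega
        · simp only [List.map_cons, List.sum_cons] at he ⊢
          rw [hpas]
          simp only [List.length_cons] at he ⊢
          rw [add_assoc, add_comm (binomPoly ((V:ℤ) - κ) V), ← add_assoc, he]
          ring

lemma repSum_nil (p : ℤ) : repSum p [] = 0 := rfl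
lemma repSum_cons (p : ℤ) (v : ℕ) (r : List ℕ) :
    repSum p (v :: r) = binomPoly ((v : ℤ) - p) v + repSum (p + 1) r := rfl
lemma tinv_nil (p : ℤ) : tinv p [] := trivial
lemma tinv_cons (p : ℤ) (x : ℕ × ℤ) (r : List (ℕ × ℤ)) :
    tinv p (x :: r) ↔ x.2 ≤ p ∧ tinv (p + 1) r := Iff.rfl
lemma iinv_nil (p : ℤ) : iinv p [] := trivial
lemma iinv_cons (p κ : ℤ) (r : List ℤ) : iinv p (κ :: r) ↔ κ ≤ p ∧ iinv (p+1) r := Iff.rfl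

lemma binomPoly_comp (c : ℤ) (j : ℕ) :
    (binomPoly c j).comp (X + 1) = binomPoly (c + 1) j := by
  unfold binomPoly
  rw [Polynomial.smul_comp]
  congr 1
  rw [Polynomial.prod_comp]
  refine Finset.prod_congr rfl fun k _ => ?_
  push_cast
  simp [Polynomial.add_comp]
  ring
-- decomposition of tinv over append
lemma tinv_append_split : ∀ (s t : List (ℕ × ℤ)) (p : ℤ), tinv p (s ++ t) →
    tinv p s ∧ tinv (p + s.length) t := by
  intro s
  induction s with
  | nil => intro t p h; simpa [tinv_nil] using h
  | cons x r ih =>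
    intro t p h
    rw [List.cons_append, tinv_cons] at h
    obtain ⟨h1, h2⟩ := h
    obtain ⟨h3, h4⟩ := ih t (p+1) h2
    refine ⟨(tinv_cons p x r).mpr ⟨h1, h3⟩, ?_⟩
    have : p + 1 + (r.length : ℤ) = p + ((x :: r).length : ℤ) := by
      push_cast [List.length_cons]; ring
    rwa [this] at h4

-- split a sorted bounded token list into the (V+1)-block and the rest
lemma splitV (V : ℕ) : ∀ (t : List (ℕ × ℤ)), List.Pairwise (· ≥ ·) (t.map Prod.fst) →
    (∀ x ∈ t, x.1 ≤ V + 1) →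
    ∃ (idxs : List ℤ) (B : List (ℕ × ℤ)),
      t = (idxs.map (fun κ => ((V+1 : ℕ), κ))) ++ B ∧ (∀ x ∈ B, x.1 ≤ V) ∧
      List.Pairwise (· ≥ ·) (B.map Prod.fst) := by
  intro t
  induction t with
  | nil => exact fun _ _ => ⟨[], [], by simp⟩
  | cons x r ih =>
    intro hs hb
    rw [List.map_cons, List.pairwise_cons] at hs
    by_cases hx : x.1 = V + 1
    · obtain ⟨idxs, B, hEq, hBle, hBs⟩ := ih hs.2 (fun y hy => hb y (List.mem_cons_of_mem x hy))
      refine ⟨x.2 :: idxs, B, ?_, hBle, hBs⟩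
      simp only [List.map_cons, List.cons_append, hEq]
      congr 1
      rw [← hx]
    · refine ⟨[], x :: r, by simp, ?_, by rw [List.map_cons, List.pairwise_cons]; exact hs⟩
      intro y hy
      rcases List.mem_cons.mp hy with h | h
      · subst h; have := hb y (List.mem_cons_self); omega
      · have h1 := hs.1 y.1 (List.mem_map_of_mem (f := Prod.fst) h)
        have h2 := hb x (List.mem_cons_self)
        omega

lemma tinv_of_le (V : ℕ) : ∀ (l : List ℤ) (p : ℤ), (∀ κ ∈ l, κ ≤ p) →
    tinv p (l.map (fun κ => (V, κ))) := by
  intro l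
  induction l with
  | nil => intro p _; simpa using tinv_nil p
  | cons κ r ih =>
    intro p h
    rw [List.map_cons, tinv_cons]
    exact ⟨h κ (List.mem_cons_self), ih (p+1) fun y hy => (h y (List.mem_cons_of_mem κ hy)).trans (by omega)⟩

lemma iinv_of_tinv (V : ℕ) : ∀ (l : List ℤ) (p : ℤ),
    tinv p (l.map (fun κ => (V, κ))) → iinv p l := by
  intro l
  induction l with
  | nil => intro p _; exact iinv_nil p
  | cons κ r ih =>
    intro p h
    rw [List.map_cons, tinv_cons] at h
    exact (iinv_cons p κ r).mpr ⟨h.1, ih (p+1) h.2⟩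

lemma tokSum_map_val (V : ℕ) (l : List ℤ) :
    tokSum (l.map (fun κ => (V, κ))) = (l.map (fun κ => binomPoly ((V:ℤ) - κ) V)).sum := by
  induction l with
  | nil => simpa using tokSum_nil
  | cons κ r ih => rw [List.map_cons, tokSum_cons, List.map_cons, List.sum_cons, ih]

lemma sorted_replicate_append (m V : ℕ) (b : List ℕ) (hb : List.Pairwise (· ≥ ·) b)
    (hle : ∀ x ∈ b, x ≤ V) : List.Pairwise (· ≥ ·) (List.replicate m V ++ b) := by
  rw [List.pairwise_append]
  refine ⟨?_, hb, ?_⟩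
  · induction m with
    | zero => simp
    | succ n ih =>
      rw [List.replicate_succ]
      exact List.Pairwise.cons (fun y hy => by rw [List.eq_of_mem_replicate hy]) ih
  · intro a ha y hy
    rw [List.eq_of_mem_replicate ha]
    exact hle y hy

lemma tokSum_zero_case : ∀ (t : List (ℕ × ℤ)) (p : ℤ), (∀ x ∈ t, x.1 = 0) →
    tokSum t = repSum p (List.replicate t.length 0) := by
  intro t
  induction t with
  | nil => intro p _; rw [tokSum_nil]; simp [repSum_nil]
  | cons x r ih =>
    intro p h
    rw [tokSum_cons, List.length_cons, List.replicate_succ, repSum_cons,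
      h x (List.mem_cons_self), ih (p+1) fun y hy => h y (List.mem_cons_of_mem x hy)]
    rw [binomPoly_zero', binomPoly_zero']
lemma outer : ∀ (V : ℕ) (t : List (ℕ × ℤ)) (p : ℤ),
    List.Pairwise (· ≥ ·) (t.map Prod.fst) → (∀ x ∈ t, x.1 ≤ V) → tinv p t →
    ∃ b : List ℕ, List.Pairwise (· ≥ ·) b ∧ (∀ x ∈ b, x ≤ V) ∧ tokSum t = repSum p b := by
  intro V
  induction V with
  | zero =>
    intro t p _ hle _
    refine ⟨List.replicate t.length 0, ?_, ?_, ?_⟩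
    · simpa using sorted_replicate_append t.length 0 [] (by simp) (by simp)
    · intro x hx; rw [List.eq_of_mem_replicate hx]
    · exact tokSum_zero_case t p fun x hx => Nat.le_zero.mp (hle x hx)
  | succ V ih =>
    intro t p hsort hle htinv
    obtain ⟨idxs, B, hEq, hBle, hBs⟩ := splitV V t hsort hle
    rw [hEq] at htinv
    obtain ⟨hA, hB⟩ := tinv_append_split _ B p htinv
    have hAlen : ((idxs.map (fun κ => ((V+1 : ℕ), κ))).length : ℤ) = idxs.length := by
      simp
    rw [hAlen] at hB
    have hiinv : iinv p idxs := iinv_of_tinv (V+1) idxs p hA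
    obtain ⟨extra, hbnd, hsum⟩ := inner V (imeas p idxs) p idxs hiinv le_rfl
    set p' : ℤ := p + idxs.length with hp'
    have hext : tinv p' (extra.map (fun κ => (V, κ))) := tinv_of_le V extra p' hbnd
    have hBt : tinv (p' + (extra.map (fun κ => (V, κ))).length) B :=
      tinv_mono B p' _ (by omega) hB
    have htinv2 : tinv p' ((extra.map (fun κ => (V, κ))) ++ B) := tinv_append hext hBt
    have hsort2 : List.Pairwise (· ≥ ·) (((extra.map (fun κ => (V, κ))) ++ B).map Prod.fst) := by
      rw [List.map_append, List.map_map]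
      have : (extra.map (Prod.fst ∘ fun κ => ((V : ℕ), κ))) = List.replicate extra.length V := by
        simp
      rw [this]
      exact sorted_replicate_append extra.length V (B.map Prod.fst) hBs
        (by intro x hx; obtain ⟨y, hy, rfl⟩ := List.mem_map.mp hx; exact hBle y hy)
    have hle2 : ∀ x ∈ (extra.map (fun κ => (V, κ))) ++ B, x.1 ≤ V := by
      intro x hx
      rcases List.mem_append.mp hx with h | h
      · obtain ⟨y, _, rfl⟩ := List.mem_map.mp h; exact le_rfl
      · exact hBle x h
    obtain ⟨b', hb's, hb'le, hb'sum⟩ := ih ((extra.map (fun κ => (V, κ))) ++ B) p' hsort2 hle2 htinv2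
    refine ⟨List.replicate idxs.length (V+1) ++ b', ?_, ?_, ?_⟩
    · exact sorted_replicate_append idxs.length (V+1) b' hb's
        (fun x hx => (hb'le x hx).trans (Nat.le_succ V))
    · intro x hx
      rcases List.mem_append.mp hx with h | h
      · rw [List.eq_of_mem_replicate h]
      · exact (hb'le x h).trans (Nat.le_succ V)
    · rw [hEq, tokSum_append, repSum_append]
      have h1 : tokSum (idxs.map (fun κ => ((V+1 : ℕ), κ))) =
          repSum p (List.replicate idxs.length (V + 1)) +
          (extra.map (fun κ => binomPoly ((V:ℤ) - κ) V)).sum := by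
        rw [tokSum_map_val (V+1) idxs, ← hsum]
        push_cast
        ring
      rw [h1]
      have h2 : (extra.map (fun κ => binomPoly ((V:ℤ) - κ) V)).sum + tokSum B =
          repSum p' b' := by
        rw [← tokSum_map_val V extra, ← tokSum_append, hb'sum]
      have hlen : p + ((List.replicate idxs.length (V+1)).length : ℤ) = p' := by
        simp [hp']
      rw [hlen, ← h2]
      ring
/-- tokens for values `l` with indices `p, p+1, …`. -/
def tk : ℤ → List ℕ → List (ℕ × ℤ)
  | _, [] => []
  | p, v :: r => (v, p) :: tk (p + 1) r

lemma tk_map_fst : ∀ (l : List ℕ) (p : ℤ), (tk p l).map Prod.fst = l := by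
  intro l
  induction l with
  | nil => intro p; rfl
  | cons v r ih => intro p; simp [tk, ih (p+1)]

lemma tk_tokSum : ∀ (l : List ℕ) (p : ℤ), tokSum (tk p l) = repSum p l := by
  intro l
  induction l with
  | nil => intro p; rfl
  | cons v r ih =>
    intro p
    show binomPoly ((v:ℤ) - p) v + tokSum (tk (p+1) r) = _
    rw [ih (p+1)]; rfl

lemma tk_tinv : ∀ (l : List ℕ) (p : ℤ), tinv (p + 1) (tk p l) := by
  intro l
  induction l with
  | nil => intro p; trivial
  | cons v r ih => exact fun p => ⟨by omega, ih (p+1)⟩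

lemma repSum_comp : ∀ (l : List ℕ) (p : ℤ), (repSum p l).comp (X + 1) = repSum (p - 1) l := by
  intro l
  induction l with
  | nil => intro p; simp [repSum]
  | cons v r ih =>
    intro p
    show (binomPoly ((v:ℤ) - p) v + repSum (p+1) r).comp (X+1) = _
    rw [Polynomial.add_comp, binomPoly_comp, ih (p+1)]
    show _ = binomPoly ((v:ℤ) - (p-1)) v + repSum (p - 1 + 1) r
    have h1 : (v:ℤ) - p + 1 = (v:ℤ) - (p-1) := by ring
    have h2 : p + 1 - 1 = p - 1 + 1 := by ring
    rw [h1, h2]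

lemma repSum_spec : ∀ (b : List ℕ) (p : ℤ), repSum p b =
    ∑ i ∈ Finset.range b.length, binomPoly ((b.getD i 0 : ℤ) - (p + i)) (b.getD i 0) := by
  intro b
  induction b with
  | nil => intro p; simp [repSum]
  | cons v r ih =>
    intro p
    rw [List.length_cons, Finset.sum_range_succ']
    show binomPoly ((v:ℤ) - p) v + repSum (p+1) r = _
    rw [ih (p+1), add_comm]
    congr 1
    · refine Finset.sum_congr rfl fun i _ => ?_
      rw [List.getD_cons_succ]
      congr 1
      push_cast; ring
    · rw [List.getD_cons_zero]
      congr 1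
      push_cast; ring
lemma le_foldr_max : ∀ (l : List ℕ) (x : ℕ), x ∈ l → x ≤ l.foldr max 0 := by
  intro l
  induction l with
  | nil => intro x hx; cases hx
  | cons v r ih =>
    intro x hx
    rcases List.mem_cons.mp hx with rfl | hx
    · exact le_max_left _ _
    · exact (ih x hx).trans (le_max_right _ _)

/-- If `P` admits a Gotzmann representation, then so does the shifted
polynomial `Q(d) = P(d + 1)`. -/
theorem hasGotzmannRep_shift (P : Polynomial ℚ) (hP : HasGotzmannRep P) :
    HasGotzmannRep (P.comp (X + 1)) := by
  obtain ⟨a, hsort, hPeq⟩ := hP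
  have hP0 : P = repSum 0 a := by
    rw [repSum_spec a 0, hPeq]
    refine Finset.sum_congr rfl fun i _ => ?_
    norm_num
  have hcomp : P.comp (X + 1) = repSum (-1) a := by
    rw [hP0, repSum_comp]
    norm_num
  have hsort' : List.Pairwise (· ≥ ·) ((tk (-1) a).map Prod.fst) := by
    rw [tk_map_fst]; exact hsort
  have hle : ∀ x ∈ tk (-1) a, x.1 ≤ a.foldr max 0 := by
    intro x hx
    refine le_foldr_max a x.1 ?_
    rw [← tk_map_fst a (-1)]
    exact List.mem_map_of_mem (f := Prod.fst) hx
  have htinv : tinv 0 (tk (-1) a) := by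
    have := tk_tinv a (-1)
    norm_num at this
    exact this
  obtain ⟨b, hbs, _, hbsum⟩ := outer (a.foldr max 0) (tk (-1) a) 0 hsort' hle htinv
  refine ⟨b, hbs, ?_⟩
  rw [hcomp, ← tk_tokSum a (-1), hbsum, repSum_spec b 0]
  refine Finset.sum_congr rfl fun i _ => ?_
  norm_num
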